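/- arXiv:2601.11274 — 3 statements merged into one kernel-verified Lean document; each statement's English description precedes it below -/
import Mathlib

section
/- Let {ν_n}_{n≥1} be a sequence of parametric b-measures on ℝ^N with respect to {ω_j}_{j≥1} such that the set {ν_n : n ≥ 1} ∪ {ν₀} has bounded l-bounds (for each j there is c_j > 0 and a choice of l-bounds l_j^n with l_j^n([t,t+1]) ≤ c_j for all t ∈ ℝ and n ≥ 0). Let D be a countable dense subset of ℝ^N and Θ = {θ_j^I} a suitable set of moduli of continuity. If ν_n converges to the parametric b-measure ν₀ in σ_D, i.e., (ν_n)_y(I) → (ν₀)_y(I) for every y ∈ D and every compact interval I with rational endpoints, then ν_n converges to ν₀ in σ_Θ, i.e., for every such interval I and every j ∈ ℕ, lim_{n→∞} sup_{y(·)∈𝒦_j^I} |∫_I d(ν_n)_{y(s)} − ∫_I d(ν₀)_{y(s)}| = 0. -/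
open MeasureTheory Set Filter Topology

/-- A (continuous real) b-measure: a set function on the bounded Borel subsets of `ℝ`
which vanishes on `∅`, is countably additive over countable pairwise disjoint families
of bounded Borel sets with bounded union, and vanishes on singletons. -/
structure IsBMeasure (μ : Set ℝ → ℝ) : Prop where
  empty : μ ∅ = 0
  countably_additive : ∀ A : ℕ → Set ℝ, (∀ n, MeasurableSet (A n)) →
    (∀ n, Bornology.IsBounded (A n)) → Pairwise (Function.onFun Disjoint A) →
    Bornology.IsBounded (⋃ n, A n) →
    HasSum (fun n => μ (A n)) (μ (⋃ n, A n))
  singleton : ∀ t : ℝ, μ {t} = 0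

/-- A locally finite atomless Borel measure on `ℝ`. -/
def GoodMeasure (m : Measure ℝ) : Prop :=
  IsLocallyFiniteMeasure m ∧ ∀ t : ℝ, m {t} = 0

/-- `P` is a finite Borel partition of `A`. -/
def IsBorelPartition (A : Set ℝ) {n : ℕ} (P : Fin n → Set ℝ) : Prop :=
  (∀ i, MeasurableSet (P i)) ∧ Pairwise (Function.onFun Disjoint P) ∧ (⋃ i, P i) = A

/-- `|μ| ≤ m` : total-variation bound of the set function `μ` by the measure `m`,
expressed through finite Borel partitions of bounded Borel sets. -/
def TVLE (μ : Set ℝ → ℝ) (m : Measure ℝ) : Prop :=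
  ∀ A : Set ℝ, Bornology.IsBounded A → MeasurableSet A →
    ∀ (n : ℕ) (P : Fin n → Set ℝ), IsBorelPartition A P →
      ∑ i, |μ (P i)| ≤ (m A).toReal

/-- Partition-sum bound `Σ |μ₁(Aᵢ) - μ₂(Aᵢ)| ≤ c · l(A)` for the difference of two
set functions, over finite Borel partitions of bounded Borel sets. -/
def DiffLE (μ₁ μ₂ : Set ℝ → ℝ) (c : ℝ) (l : Measure ℝ) : Prop :=
  ∀ A : Set ℝ, Bornology.IsBounded A → MeasurableSet A →
    ∀ (n : ℕ) (P : Fin n → Set ℝ), IsBorelPartition A P →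
      ∑ i, |μ₁ (P i) - μ₂ (P i)| ≤ c * (l A).toReal

variable {E : Type*} [NormedAddCommGroup E]

/-- `m` is an m-bound of `ν` on the closed ball of radius `j`. -/
def HasMBound (ν : E → Set ℝ → ℝ) (j : ℕ) (m : Measure ℝ) : Prop :=
  GoodMeasure m ∧ ∀ y : E, ‖y‖ ≤ (j : ℝ) → TVLE (ν y) m

/-- `l` is an l-bound of `ν` on the closed ball of radius `j`, for the modulus `ω`. -/
def HasLBound (ω : ℝ → ℝ) (ν : E → Set ℝ → ℝ) (j : ℕ) (l : Measure ℝ) : Prop :=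
  GoodMeasure l ∧ ∀ y₁ y₂ : E, ‖y₁‖ ≤ (j : ℝ) → ‖y₂‖ ≤ (j : ℝ) →
    DiffLE (ν y₁) (ν y₂) (ω ‖y₁ - y₂‖) l

/-- A non-decreasing family of moduli of continuity `{ω_j}`. -/
structure IsModulusFamily (ω : ℕ → ℝ → ℝ) : Prop where
  continuousOn : ∀ j, ContinuousOn (ω j) (Ici 0)
  monotoneOn : ∀ j, MonotoneOn (ω j) (Ici 0)
  map_zero : ∀ j, ω j 0 = 0
  nonneg : ∀ j x, 0 ≤ x → 0 ≤ ω j x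
  mono_index : ∀ j x, 0 ≤ x → ω j x ≤ ω (j + 1) x

/-- A parametric b-measure on `E` with respect to the family of moduli `ω`. -/
def IsParamBMeasure (ω : ℕ → ℝ → ℝ) (ν : E → Set ℝ → ℝ) : Prop :=
  (∀ y, IsBMeasure (ν y)) ∧
    ∀ j : ℕ, 1 ≤ j → ∃ m l : Measure ℝ, HasMBound ν j m ∧ HasLBound (ω j) ν j l

/-- A tagged partition of `[a,b]`. -/
structure TaggedPartition (a b : ℝ) where
  k : ℕ
  k_pos : 0 < k
  t : ℕ → ℝ
  tag : ℕ → ℝ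
  left : t 0 = a
  right : t k = b
  lt : ∀ i < k, t i < t (i + 1)
  tag_mem : ∀ i < k, tag i ∈ Set.Icc (t i) (t (i + 1))

/-- The mesh of the tagged partition is `< δ`. -/
def TaggedPartition.MeshLT {a b : ℝ} (P : TaggedPartition a b) (δ : ℝ) : Prop :=
  ∀ i < P.k, P.t (i + 1) - P.t i < δ

/-- The Riemann sum of the parametric b-measure `ν` along the curve `y` over the
tagged partition `P`. -/
def RiemannSum (ν : E → Set ℝ → ℝ) (y : ℝ → E) {a b : ℝ} (P : TaggedPartition a b) : ℝ :=
  ∑ i ∈ Finset.range P.k, ν (y (P.tag i)) (Set.Icc (P.t i) (P.t (i + 1)))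

/-- `L = ∫_a^b dν_{y(s)}` : `L` is the limit of the Riemann sums of `ν` along `y`
over tagged partitions of `[a,b]` as the mesh tends to `0`. -/
def IsCurveIntegral (ν : E → Set ℝ → ℝ) (y : ℝ → E) (a b : ℝ) (L : ℝ) : Prop :=
  ∀ ε > 0, ∃ δ > 0, ∀ P : TaggedPartition a b, P.MeshLT δ → |L - RiemannSum ν y P| < ε

/-- A suitable set of moduli of continuity `Θ = {θ_j^{[q₁,q₂]}}`. -/
structure IsSuitableModuli (Θ : ℕ → ℚ → ℚ → ℝ → ℝ) : Prop where
  continuousOn : ∀ (j : ℕ) (q₁ q₂ : ℚ), q₁ < q₂ → ContinuousOn (Θ j q₁ q₂) (Ici 0)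
  monotoneOn : ∀ (j : ℕ) (q₁ q₂ : ℚ), q₁ < q₂ → MonotoneOn (Θ j q₁ q₂) (Ici 0)
  map_zero : ∀ (j : ℕ) (q₁ q₂ : ℚ), q₁ < q₂ → Θ j q₁ q₂ 0 = 0
  nonneg : ∀ (j : ℕ) (q₁ q₂ : ℚ) (x : ℝ), q₁ < q₂ → 0 ≤ x → 0 ≤ Θ j q₁ q₂ x
  mono : ∀ (j₁ j₂ : ℕ) (q₁ q₂ p₁ p₂ : ℚ), j₁ ≤ j₂ → q₁ ≤ p₁ → p₁ < p₂ → p₂ ≤ q₂ →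
    ∀ x : ℝ, 0 ≤ x → Θ j₁ p₁ p₂ x ≤ Θ j₂ q₁ q₂ x

/-- The set `𝒦_j^I` of continuous functions `y : I → E`, `I = [q₁,q₂]`, bounded by `j`
and admitting `θ_j^I` as modulus of continuity. -/
def KSet (E : Type*) [NormedAddCommGroup E] (Θ : ℕ → ℚ → ℚ → ℝ → ℝ)
    (j : ℕ) (q₁ q₂ : ℚ) : Set (ℝ → E) :=
  {y | ContinuousOn y (Set.Icc (q₁ : ℝ) (q₂ : ℝ)) ∧
    (∀ t ∈ Set.Icc (q₁ : ℝ) (q₂ : ℝ), ‖y t‖ ≤ (j : ℝ)) ∧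
    ∀ t₁ ∈ Set.Icc (q₁ : ℝ) (q₂ : ℝ), ∀ t₂ ∈ Set.Icc (q₁ : ℝ) (q₂ : ℝ),
      ‖y t₁ - y t₂‖ ≤ Θ j q₁ q₂ |t₁ - t₂|}

/-- Convergence `ν_n → ν₀` in the topology `σ_Θ` : the integrals along curves of
`𝒦_j^I` converge uniformly, for every `j` and every compact interval `I` with
rational endpoints. -/
def SigmaThetaTendsto {E : Type*} [NormedAddCommGroup E] (Θ : ℕ → ℚ → ℚ → ℝ → ℝ)
    (ν : ℕ → E → Set ℝ → ℝ) (ν₀ : E → Set ℝ → ℝ) : Prop :=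
  ∀ (j : ℕ) (q₁ q₂ : ℚ), q₁ < q₂ → ∀ ε > 0, ∃ n₀ : ℕ, ∀ n ≥ n₀,
    ∀ y ∈ KSet E Θ j q₁ q₂, ∀ L L₀ : ℝ,
      IsCurveIntegral (ν n) y (q₁ : ℝ) (q₂ : ℝ) L →
      IsCurveIntegral ν₀ y (q₁ : ℝ) (q₂ : ℝ) L₀ → |L - L₀| < ε

/-- The time-translate `ν·t` of a parametric b-measure: `(ν·t)_y(A) = ν_y(A + t)`. -/
def BTranslate (ν : E → Set ℝ → ℝ) (t : ℝ) : E → Set ℝ → ℝ :=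
  fun y A => ν y ((fun s => s + t) '' A)

/-- The time-translate `m·t` of a Borel measure: `(m·t)(A) = m(A + t)`. -/
noncomputable def MTranslate (m : Measure ℝ) (t : ℝ) : Measure ℝ :=
  Measure.map (fun s => s - t) m

/-- An N-dimensional parametric b-measure on `E` with common m-bounds `m j` and
common Lipschitz l-bounds `l j`. -/
def IsNDimParamBMeasure {M : ℕ} (νbar : Fin M → E → Set ℝ → ℝ)
    (m l : ℕ → Measure ℝ) : Prop :=
  (∀ i y, IsBMeasure (νbar i y)) ∧
    ∀ j : ℕ, 1 ≤ j → GoodMeasure (m j) ∧ GoodMeasure (l j) ∧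
      (∀ i, ∀ y : E, ‖y‖ ≤ (j : ℝ) → TVLE (νbar i y) (m j)) ∧
      (∀ i, ∀ y₁ y₂ : E, ‖y₁‖ ≤ (j : ℝ) → ‖y₂‖ ≤ (j : ℝ) →
        DiffLE (νbar i y₁) (νbar i y₂) ‖y₁ - y₂‖ (l j))

/-- The oriented curve integral: `∫_b^a := -∫_a^b`. -/
def IsSignedCurveIntegral (ν : E → Set ℝ → ℝ) (y : ℝ → E) (a b : ℝ) (L : ℝ) : Prop :=
  (a ≤ b ∧ IsCurveIntegral ν y a b L) ∨ (b < a ∧ IsCurveIntegral ν y b a (-L))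

/-- `y` is a solution on `S` of the Cauchy problem `y' = ν̄_y`, `y(t₀) = y₀`, for the
N-dimensional parametric b-measure `ν̄`: componentwise,
`y_i(t) = y_{0,i} + ∫_{t₀}^t dν^i_{y(s)}`. -/
def IsSolutionOn {M : ℕ} (νbar : Fin M → EuclideanSpace ℝ (Fin M) → Set ℝ → ℝ)
    (t₀ : ℝ) (y₀ : EuclideanSpace ℝ (Fin M)) (S : Set ℝ)
    (y : ℝ → EuclideanSpace ℝ (Fin M)) : Prop :=
  t₀ ∈ S ∧ y t₀ = y₀ ∧ ContinuousOn y S ∧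
    ∀ t ∈ S, ∀ i : Fin M, IsSignedCurveIntegral (νbar i) y t₀ t (y t i - y₀ i)

/-- `y` is the maximal (noncontinuable) solution, defined on the open interval `S`:
every solution on an interval containing `t₀` is a restriction of `y`. -/
def IsMaximalSolution {M : ℕ} (νbar : Fin M → EuclideanSpace ℝ (Fin M) → Set ℝ → ℝ)
    (t₀ : ℝ) (y₀ : EuclideanSpace ℝ (Fin M)) (S : Set ℝ)
    (y : ℝ → EuclideanSpace ℝ (Fin M)) : Prop :=
  IsSolutionOn νbar t₀ y₀ S y ∧ IsOpen S ∧ S.OrdConnected ∧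
    ∀ S' : Set ℝ, S'.OrdConnected → ∀ z, IsSolutionOn νbar t₀ y₀ S' z →
      S' ⊆ S ∧ Set.EqOn z y S'

/-! Fix `j` and `I = [q₁, q₂]`. Cut `I` into `K` equal cells `I_k` with rational endpoints and fix a
finite `δ`-net `F ⊆ D` of the ball of radius `j`, where `K` and `F` depend only on `j`, `I`, `θ_j^I`
and `δ`. Every curve `y ∈ 𝒦_j^I` then stays within `δ` of some `d_k ∈ F` on `I_k`, and refining
the grid in the Riemann sums shows, by the l-bounds, that `∫_I dν_{y(s)}` differs from the step sum
`∑ₖ ν_{d_k}(I_k)` by at most `ω_{j+1}(δ) · l(I)`. Since the l-bounds are uniformly bounded on unit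
intervals, this holds uniformly in `n` for all `ν_n` and for `ν₀`. The step sums involve only
the finitely many values `ν_n,d(I_k)` with `d ∈ F`, which converge by `σ_D`-convergence. -/

theorem sum_range_Icc_telescope {M : Type*} [AddCommMonoid M] (f : Set ℝ → M)
    (hpt : ∀ x, f {x} = 0)
    (hadd : ∀ {a b c : ℝ}, a ≤ b → b ≤ c → f (Icc a c) = f (Icc a b) + f (Icc b c))
    {t : ℕ → ℝ} (ht : Monotone t) (m : ℕ) :
    ∑ i ∈ Finset.range m, f (Icc (t i) (t (i + 1))) = f (Icc (t 0) (t m)) := by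
  induction m with
  | zero => simp [hpt]
  | succ m ih => rw [Finset.sum_range_succ, ih, hadd (ht m.zero_le) (ht m.le_succ)]

theorem sum_range_mul_eq_sum_sum {M : Type*} [AddCommMonoid M] (f : ℕ → M) (K N : ℕ) :
    ∑ i ∈ Finset.range (K * N), f i =
      ∑ k ∈ Finset.range K, ∑ r ∈ Finset.range N, f (k * N + r) := by
  induction K with
  | zero => simp
  | succ K ih => rw [Finset.sum_range_succ, ← ih, Nat.succ_mul, Finset.sum_range_add]

namespace IsBMeasure

variable {μ : Set ℝ → ℝ}

theorem union (h : IsBMeasure μ) {A B : Set ℝ} (hA : MeasurableSet A) (hB : MeasurableSet B)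
    (hAb : Bornology.IsBounded A) (hBb : Bornology.IsBounded B) (hAB : Disjoint A B) :
    μ (A ∪ B) = μ A + μ B := by
  set f : ℕ → Set ℝ := fun n => if n = 0 then A else if n = 1 then B else ∅
  have hU : (⋃ n, f n) = A ∪ B := by
    rw [← union_iUnion_nat_succ, ← union_iUnion_nat_succ]
    simp [f]
  have hsum := h.countably_additive f (by rintro (_ | _ | n) <;> simp [f, hA, hB])
    (by rintro (_ | _ | n) <;> simp [f, hAb, hBb])
    (by rintro (_ | _ | i) (_ | _ | j) hij <;> simp_all [f, Function.onFun, hAB.symm])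
    (hU ▸ hAb.union hBb)
  rw [hU] at hsum
  have hvanish : ∀ n ∉ Finset.range 2, μ (f n) = 0 := fun n hn => by
    simp only [Finset.mem_range, not_lt] at hn
    simp [f, show n ≠ 0 by omega, show n ≠ 1 by omega, h.empty]
  exact hsum.unique (by simpa [Finset.sum_range_succ, f] using hasSum_sum_of_ne_finset_zero hvanish)

theorem Icc_add_Icc (h : IsBMeasure μ) {a b c : ℝ} (hab : a ≤ b) (hbc : b ≤ c) :
    μ (Icc a c) = μ (Icc a b) + μ (Icc b c) := by
  have hsplit : ∀ x ≤ b, μ (Icc x c) = μ (Icc x b) + μ (Ioc b c) := fun x hx => by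
    rw [← Icc_union_Ioc_eq_Icc hx hbc, h.union measurableSet_Icc measurableSet_Ioc
      (Metric.isBounded_Icc _ _) (Metric.isBounded_Ioc _ _)
      ((Iic_disjoint_Ioc le_rfl).mono_left Icc_subset_Iic_self)]
  rw [hsplit a hab, hsplit b le_rfl, Icc_self, h.singleton, zero_add]

end IsBMeasure

theorem measure_Icc_add_Icc {l : Measure ℝ} (hl : ∀ x, l {x} = 0) {a b c : ℝ} (hab : a ≤ b)
    (hbc : b ≤ c) : l (Icc a c) = l (Icc a b) + l (Icc b c) := by
  rw [← Icc_union_Ioc_eq_Icc hab hbc,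
    measure_union ((Iic_disjoint_Ioc le_rfl).mono_left Icc_subset_Iic_self) measurableSet_Ioc,
    measure_congr (Ioc_ae_eq_Icc' (hl b))]

theorem toReal_measure_Icc_le {l : Measure ℝ} {c : ℝ} (hc : 0 ≤ c)
    (h : ∀ t, l (Icc t (t + 1)) ≤ ENNReal.ofReal c) (a b : ℝ) :
    (l (Icc a b)).toReal ≤ (⌊b - a⌋₊ + 1) * c := by
  set K := ⌊b - a⌋₊ + 1
  have hcover : Icc a b ⊆ ⋃ k ∈ Finset.range K, Icc (a + k) (a + k + 1) := by
    rintro x ⟨hax, hxb⟩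
    refine mem_iUnion₂.2 ⟨⌊x - a⌋₊, Finset.mem_range.2 (Nat.lt_succ_of_le
      (Nat.floor_le_floor (by linarith))), ?_, ?_⟩
    · linarith [Nat.floor_le (sub_nonneg.2 hax)]
    · linarith [Nat.lt_floor_add_one (x - a)]
  have hle : l (Icc a b) ≤ K * ENNReal.ofReal c :=
    calc l (Icc a b) ≤ ∑ k ∈ Finset.range K, l (Icc (a + k) (a + k + 1)) :=
          (measure_mono hcover).trans (measure_biUnion_finset_le _ _)
      _ ≤ ∑ k ∈ Finset.range K, ENNReal.ofReal c := Finset.sum_le_sum fun k _ => h _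
      _ = K * ENNReal.ofReal c := by simp
  calc (l (Icc a b)).toReal ≤ (K * ENNReal.ofReal c).toReal :=
        ENNReal.toReal_mono (by finiteness) hle
    _ = (⌊b - a⌋₊ + 1) * c := by
        rw [ENNReal.toReal_mul, ENNReal.toReal_natCast, ENNReal.toReal_ofReal hc]
        push_cast [K]
        rfl

theorem DiffLE.abs_sub_le {μ₁ μ₂ : Set ℝ → ℝ} {c : ℝ} {l : Measure ℝ} (h : DiffLE μ₁ μ₂ c l)
    {A : Set ℝ} (hb : Bornology.IsBounded A) (hm : MeasurableSet A) :
    |μ₁ A - μ₂ A| ≤ c * (l A).toReal := by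
  simpa using h A hb hm 1 (fun _ => A)
    ⟨fun _ => hm, fun i j hij => (hij (Subsingleton.elim i j)).elim, iUnion_const A⟩

theorem ContinuousWithinAt.exists_pos_forall_Icc_le {f : ℝ → ℝ}
    (hf : ContinuousWithinAt f (Ici 0) 0) (h0 : f 0 = 0) {ε : ℝ} (hε : 0 < ε) :
    ∃ δ > 0, ∀ x ∈ Icc 0 δ, f x ≤ ε := by
  obtain ⟨δ, hδ, hf⟩ := Metric.continuousWithinAt_iff.1 hf ε hε
  refine ⟨δ / 2, half_pos hδ, fun x ⟨hx0, hxδ⟩ => ?_⟩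
  have := hf (x := x) hx0 (by rw [Real.dist_eq, sub_zero, abs_of_nonneg hx0]; linarith)
  rw [Real.dist_eq, h0, sub_zero] at this
  exact (le_abs_self _).trans this.le

theorem IsCompact.exists_finite_subset_forall_dist_lt {X : Type*} [PseudoMetricSpace X]
    {s : Set X} (hs : IsCompact s) {D : Set X} (hD : Dense D) {ε : ℝ} (hε : 0 < ε) :
    ∃ F ⊆ D, F.Finite ∧ ∀ x ∈ s, ∃ d ∈ F, dist x d < ε := by
  obtain ⟨F, hFD, hF, hcover⟩ := hs.elim_finite_subcover_image (b := D)
    (fun d _ => Metric.isOpen_ball (x := d) (ε := ε))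
    (fun x _ => mem_iUnion₂.2 ((Metric.dense_iff.1 hD x ε hε).imp fun d hd =>
      ⟨hd.2, Metric.mem_ball_comm.1 hd.1⟩))
  refine ⟨F, hFD, hF, fun x hx => ?_⟩
  obtain ⟨d, hd, hxd⟩ := mem_iUnion₂.1 (hcover hx)
  exact ⟨d, hd, hxd⟩

section Grid

variable {𝕜 : Type*} [Field 𝕜] [LinearOrder 𝕜] [IsStrictOrderedRing 𝕜]

def gridPoint (a b : 𝕜) (n k : ℕ) : 𝕜 := a + k * ((b - a) / n)

variable {a b : 𝕜} {n : ℕ}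

@[simp]
theorem gridPoint_zero : gridPoint a b n 0 = a := by simp [gridPoint]

theorem gridPoint_self (hn : n ≠ 0) : gridPoint a b n n = b := by
  have : (n : 𝕜) ≠ 0 := Nat.cast_ne_zero.2 hn
  simp only [gridPoint]
  field_simp
  ring

theorem gridPoint_succ_sub (k : ℕ) :
    gridPoint a b n (k + 1) - gridPoint a b n k = (b - a) / n := by
  simp only [gridPoint]; push_cast; ring

theorem gridPoint_mono (hab : a ≤ b) : Monotone (gridPoint a b n) := fun k m hkm => by
  simp only [gridPoint]
  gcongr

theorem gridPoint_lt_succ (hab : a < b) (hn : 0 < n) (k : ℕ) :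
    gridPoint a b n k < gridPoint a b n (k + 1) := by
  have : 0 < (b - a) / n := div_pos (sub_pos.2 hab) (Nat.cast_pos.2 hn)
  linarith [gridPoint_succ_sub (a := a) (b := b) (n := n) k]

theorem gridPoint_mem_Icc (hab : a ≤ b) {k : ℕ} (hk : k ≤ n) : gridPoint a b n k ∈ Icc a b := by
  rcases Nat.eq_zero_or_pos n with rfl | hn
  · simp [Nat.le_zero.1 hk, hab]
  · have h0 := gridPoint_mono (n := n) hab k.zero_le
    have hn' := gridPoint_mono (n := n) hab hk
    rw [gridPoint_zero] at h0
    rw [gridPoint_self hn.ne'] at hn'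
    exact ⟨h0, hn'⟩

theorem gridPoint_mul_mul {K M : ℕ} (hM : M ≠ 0) (k : ℕ) :
    gridPoint a b (K * M) (k * M) = gridPoint a b K k := by
  simp only [gridPoint]
  push_cast
  field_simp [Nat.cast_ne_zero.2 hM]

end Grid

theorem Rat.cast_gridPoint (a b : ℚ) (n k : ℕ) :
    ((gridPoint a b n k : ℚ) : ℝ) = gridPoint (a : ℝ) b n k := by
  simp [gridPoint]

noncomputable def TaggedPartition.uniform {a b : ℝ} (hab : a < b) (n : ℕ) (hn : 0 < n) :
    TaggedPartition a b where
  k := n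
  k_pos := hn
  t := gridPoint a b n
  tag := gridPoint a b n
  left := gridPoint_zero
  right := gridPoint_self hn.ne'
  lt i _ := gridPoint_lt_succ hab hn i
  tag_mem i _ := ⟨le_rfl, (gridPoint_lt_succ hab hn i).le⟩

theorem TaggedPartition.meshLT_uniform {a b : ℝ} (hab : a < b) {n : ℕ} (hn : 0 < n) {δ : ℝ}
    (hδ : (b - a) / n < δ) : (uniform hab n hn).MeshLT δ := fun i _ => by
  simpa [uniform, gridPoint_succ_sub] using hδ

theorem riemannSum_uniform {X : Type*} (ν : X → Set ℝ → ℝ) (y : ℝ → X) {a b : ℝ} (hab : a < b)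
    {n : ℕ} (hn : 0 < n) : RiemannSum ν y (TaggedPartition.uniform hab n hn) =
      ∑ i ∈ Finset.range n, ν (y (gridPoint a b n i))
        (Icc (gridPoint a b n i) (gridPoint a b n (i + 1))) :=
  rfl

def stepSum {X : Type*} (ν : X → Set ℝ → ℝ) (d : ℕ → X) (a b : ℝ) (K : ℕ) : ℝ :=
  ∑ k ∈ Finset.range K, ν (d k) (Icc (gridPoint a b K k) (gridPoint a b K (k + 1)))

theorem stepSum_eq_sum_refine {X : Type*} {ν : X → Set ℝ → ℝ} (hν : ∀ y, IsBMeasure (ν y))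
    (d : ℕ → X) {a b : ℝ} (hab : a ≤ b) (K : ℕ) {M : ℕ} (hM : M ≠ 0) :
    stepSum ν d a b K = ∑ i ∈ Finset.range (K * M),
      ν (d (i / M)) (Icc (gridPoint a b (K * M) i) (gridPoint a b (K * M) (i + 1))) := by
  rw [sum_range_mul_eq_sum_sum, stepSum]
  refine Finset.sum_congr rfl fun k _ => ?_
  have hdiv : ∀ r ∈ Finset.range M, (k * M + r) / M = k := fun r hr => by
    rw [Nat.mul_comm, Nat.mul_add_div (Nat.pos_of_ne_zero hM),
      Nat.div_eq_of_lt (Finset.mem_range.1 hr), add_zero]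
  rw [Finset.sum_congr rfl fun r hr => by rw [hdiv r hr, add_assoc],
    sum_range_Icc_telescope (ν (d k)) (hν _).singleton (hν _).Icc_add_Icc
      (t := fun r => gridPoint a b (K * M) (k * M + r))
      (fun r s hrs => gridPoint_mono hab (by omega)) M]
  simp only [add_zero, ← Nat.succ_mul, gridPoint_mul_mul hM]

section StepApproximation

variable {ν : E → Set ℝ → ℝ} {ω : ℝ → ℝ} {j : ℕ} {l : Measure ℝ} {y : ℝ → E} {a b : ℝ}
  {K : ℕ} {d : ℕ → E} {ε : ℝ}

theorem abs_riemannSum_uniform_sub_stepSum_le (hν : ∀ y, IsBMeasure (ν y))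
    (hl : HasLBound ω ν j l) (hab : a < b) (hK : 0 < K) {M : ℕ} (hM : 0 < M)
    (hy : ∀ s ∈ Icc a b, ‖y s‖ ≤ j) (hd : ∀ k < K, ‖d k‖ ≤ j)
    (hclose : ∀ k < K, ∀ s ∈ Icc (gridPoint a b K k) (gridPoint a b K (k + 1)),
      ω ‖y s - d k‖ ≤ ε) :
    |RiemannSum ν y (TaggedPartition.uniform hab (K * M) (Nat.mul_pos hK hM)) -
      stepSum ν d a b K| ≤ ε * (l (Icc a b)).toReal := by
  have := hl.1.1
  set g := gridPoint a b (K * M)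
  have hKM : K * M ≠ 0 := (Nat.mul_pos hK hM).ne'
  have hcell : ∀ i < K * M, i / M < K ∧
      g i ∈ Icc (gridPoint a b K (i / M)) (gridPoint a b K (i / M + 1)) := fun i hi => by
    refine ⟨Nat.div_lt_of_lt_mul (by rwa [Nat.mul_comm]), ?_⟩
    rw [← gridPoint_mul_mul hM.ne' (i / M), ← gridPoint_mul_mul hM.ne' (i / M + 1)]
    exact ⟨gridPoint_mono hab.le (Nat.div_mul_le_self i M),
      gridPoint_mono hab.le
        (show i ≤ (i / M + 1) * M by rw [Nat.mul_comm]; exact (Nat.lt_mul_div_succ i hM).le)⟩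
  have hsum_l : ∑ i ∈ Finset.range (K * M), (l (Icc (g i) (g (i + 1)))).toReal =
      (l (Icc a b)).toReal := by
    rw [← ENNReal.toReal_sum fun i _ => measure_Icc_lt_top.ne,
      sum_range_Icc_telescope l hl.1.2 (measure_Icc_add_Icc hl.1.2) (gridPoint_mono hab.le),
      gridPoint_zero, gridPoint_self hKM]
  rw [riemannSum_uniform, stepSum_eq_sum_refine hν d hab.le K hM.ne', ← Finset.sum_sub_distrib,
    ← hsum_l, Finset.mul_sum]
  refine (Finset.abs_sum_le_sum_abs _ _).trans (Finset.sum_le_sum fun i hi => ?_)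
  obtain ⟨hk, hs⟩ := hcell i (Finset.mem_range.1 hi)
  have hyi := hy _ (gridPoint_mem_Icc hab.le (Finset.mem_range.1 hi).le)
  exact ((hl.2 _ _ hyi (hd _ hk)).abs_sub_le (Metric.isBounded_Icc _ _) measurableSet_Icc).trans
    (mul_le_mul_of_nonneg_right (hclose _ hk _ hs) ENNReal.toReal_nonneg)

theorem IsCurveIntegral.abs_sub_stepSum_le {L : ℝ} (hL : IsCurveIntegral ν y a b L)
    (hν : ∀ y, IsBMeasure (ν y)) (hl : HasLBound ω ν j l) (hab : a < b) (hK : 0 < K)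
    (hy : ∀ s ∈ Icc a b, ‖y s‖ ≤ j) (hd : ∀ k < K, ‖d k‖ ≤ j)
    (hclose : ∀ k < K, ∀ s ∈ Icc (gridPoint a b K k) (gridPoint a b K (k + 1)),
      ω ‖y s - d k‖ ≤ ε) :
    |L - stepSum ν d a b K| ≤ ε * (l (Icc a b)).toReal := by
  refine le_of_forall_pos_lt_add fun η hη => ?_
  obtain ⟨δ, hδ, hP⟩ := hL η hη
  obtain ⟨M, hM⟩ := exists_nat_gt ((b - a) / δ)
  have hM0 : 0 < M := by exact_mod_cast (div_pos (sub_pos.2 hab) hδ).trans hM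
  have hmesh : (b - a) / ↑(K * M) < δ := by
    rw [div_lt_iff₀ hδ] at hM
    have hK1 : (1 : ℝ) ≤ K := by exact_mod_cast hK
    rw [div_lt_iff₀ (by positivity)]
    push_cast
    nlinarith
  have hRS := hP _ (TaggedPartition.meshLT_uniform hab (Nat.mul_pos hK hM0) hmesh)
  have hstep := abs_riemannSum_uniform_sub_stepSum_le hν hl hab hK hM0 hy hd hclose
  linarith [abs_sub_le L (RiemannSum ν y (TaggedPartition.uniform hab _ (Nat.mul_pos hK hM0)))
    (stepSum ν d a b K)]

end StepApproximation

theorem exists_grid_finite_net [ProperSpace E] {D : Set E} (hD : Dense D)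
    {Θ : ℕ → ℚ → ℚ → ℝ → ℝ} (hΘ : IsSuitableModuli Θ) (j : ℕ) {q₁ q₂ : ℚ} (hq : q₁ < q₂)
    {δ : ℝ} (hδ : 0 < δ) (hδ1 : δ ≤ 1) :
    ∃ K > 0, ∃ F ⊆ D, F.Finite ∧ ∀ y ∈ KSet E Θ j q₁ q₂, ∃ d : ℕ → E, ∀ k < K,
      d k ∈ F ∧ ‖d k‖ ≤ (j + 1 : ℕ) ∧
        ∀ s ∈ Icc (gridPoint (q₁ : ℝ) q₂ K k) (gridPoint (q₁ : ℝ) q₂ K (k + 1)),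
          ‖y s - d k‖ ≤ δ := by
  have hqR : (q₁ : ℝ) < q₂ := Rat.cast_lt.2 hq
  obtain ⟨η, hη, hθη⟩ := (hΘ.continuousOn j q₁ q₂ hq 0 self_mem_Ici).exists_pos_forall_Icc_le
    (hΘ.map_zero j q₁ q₂ hq) (half_pos hδ)
  obtain ⟨K, hK⟩ := exists_nat_gt (((q₂ : ℝ) - q₁) / η)
  have hK0 : 0 < K := by exact_mod_cast (div_pos (sub_pos.2 hqR) hη).trans hK
  have hwidth : ((q₂ : ℝ) - q₁) / K < η := by
    rw [div_lt_iff₀ hη] at hK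
    rw [div_lt_iff₀ (Nat.cast_pos.2 hK0)]
    linarith
  obtain ⟨F, hFD, hF, hnet⟩ := (isCompact_closedBall (0 : E) j).exists_finite_subset_forall_dist_lt
    hD (half_pos hδ)
  refine ⟨K, hK0, F, hFD, hF, fun y ⟨_, hyj, hyθ⟩ => ?_⟩
  have hg : ∀ k ≤ K, gridPoint (q₁ : ℝ) q₂ K k ∈ Icc (q₁ : ℝ) q₂ := fun k hk =>
    gridPoint_mem_Icc hqR.le hk
  choose! d hdF hd using fun k (hk : k < K) =>
    hnet (y (gridPoint (q₁ : ℝ) q₂ K k)) (mem_closedBall_zero_iff.2 (hyj _ (hg k hk.le)))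
  refine ⟨d, fun k hk => ⟨hdF k hk, ?_, fun s hs => ?_⟩⟩
  · have := norm_le_norm_add_norm_sub' (d k) (y (gridPoint (q₁ : ℝ) q₂ K k))
    push_cast
    linarith [hyj _ (hg k hk.le), hd k hk, dist_eq_norm' (y (gridPoint (q₁ : ℝ) q₂ K k)) (d k)]
  · set g := gridPoint (q₁ : ℝ) q₂ K k
    have hs' : s ∈ Icc (q₁ : ℝ) q₂ :=
      Icc_subset_Icc (hg k hk.le).1 (hg (k + 1) hk).2 hs
    have hsg : |s - g| ∈ Icc 0 η := by
      rw [abs_of_nonneg (sub_nonneg.2 hs.1)]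
      exact ⟨sub_nonneg.2 hs.1,
        by linarith [hs.2, gridPoint_succ_sub (a := (q₁ : ℝ)) (b := q₂) (n := K) k]⟩
    calc ‖y s - d k‖ ≤ ‖y s - y g‖ + ‖y g - d k‖ := norm_sub_le_norm_sub_add_norm_sub _ _ _
      _ ≤ δ / 2 + δ / 2 := add_le_add ((hyθ s hs' g (hg k hk.le)).trans (hθη _ hsg))
          (by rw [← dist_eq_norm]; exact (hd k hk).le)
      _ = δ := add_halves δ

theorem eventually_abs_stepSum_sub_lt {X : Type*} {ν : ℕ → X → Set ℝ → ℝ} {ν₀ : X → Set ℝ → ℝ}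
    {F : Set X} (hF : F.Finite) {a b : ℝ} {K : ℕ}
    (hconv : ∀ x ∈ F, ∀ k < K,
      Tendsto (fun n => ν n x (Icc (gridPoint a b K k) (gridPoint a b K (k + 1)))) atTop
        (𝓝 (ν₀ x (Icc (gridPoint a b K k) (gridPoint a b K (k + 1))))))
    {ε : ℝ} (hε : 0 < ε) :
    ∀ᶠ n in atTop, ∀ d : ℕ → X, (∀ k < K, d k ∈ F) →
      |stepSum (ν n) d a b K - stepSum ν₀ d a b K| < ε := by
  have hε' : 0 < ε / (K + 1) := by positivity
  have hev : ∀ᶠ n in atTop, ∀ x ∈ F, ∀ k ∈ Finset.range K,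
      |ν n x (Icc (gridPoint a b K k) (gridPoint a b K (k + 1))) -
        ν₀ x (Icc (gridPoint a b K k) (gridPoint a b K (k + 1)))| < ε / (K + 1) := by
    refine (eventually_all_finite hF).2 fun x hx => (eventually_all_finset _).2 fun k hk => ?_
    simpa only [Real.dist_eq] using
      Metric.tendsto_nhds.1 (hconv x hx k (Finset.mem_range.1 hk)) _ hε'
  filter_upwards [hev] with n hn d hd
  calc |stepSum (ν n) d a b K - stepSum ν₀ d a b K|
      ≤ ∑ k ∈ Finset.range K, |ν n (d k) (Icc (gridPoint a b K k) (gridPoint a b K (k + 1))) -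
          ν₀ (d k) (Icc (gridPoint a b K k) (gridPoint a b K (k + 1)))| := by
        rw [stepSum, stepSum, ← Finset.sum_sub_distrib]
        exact Finset.abs_sum_le_sum_abs _ _
    _ ≤ ∑ k ∈ Finset.range K, ε / (K + 1) :=
        Finset.sum_le_sum fun k hk => (hn _ (hd k (Finset.mem_range.1 hk)) k hk).le
    _ < ε := by
        rw [Finset.sum_const, Finset.card_range, nsmul_eq_mul, mul_div_assoc',
          div_lt_iff₀ (by positivity)]
        linarith

theorem stmt10_general {N : ℕ} (ω : ℕ → ℝ → ℝ) (hω : IsModulusFamily ω)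
    (D : Set (EuclideanSpace ℝ (Fin N))) (hDd : Dense D)
    (Θ : ℕ → ℚ → ℚ → ℝ → ℝ) (hΘ : IsSuitableModuli Θ)
    (ν : ℕ → EuclideanSpace ℝ (Fin N) → Set ℝ → ℝ)
    (ν₀ : EuclideanSpace ℝ (Fin N) → Set ℝ → ℝ)
    (hν : ∀ n, IsParamBMeasure ω (ν n)) (hν₀ : IsParamBMeasure ω ν₀)
    (lB : ℕ → ℕ → Measure ℝ) (lB0 : ℕ → Measure ℝ)
    (hlB : ∀ n j, 1 ≤ j → HasLBound (ω j) (ν n) j (lB n j))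
    (hlB0 : ∀ j, 1 ≤ j → HasLBound (ω j) ν₀ j (lB0 j))
    (hlbd : ∀ j, 1 ≤ j → ∃ c > (0 : ℝ), ∀ t : ℝ,
      (∀ n, lB n j (Set.Icc t (t + 1)) ≤ ENNReal.ofReal c) ∧
      lB0 j (Set.Icc t (t + 1)) ≤ ENNReal.ofReal c)
    (hconv : ∀ y ∈ D, ∀ q₁ q₂ : ℚ, q₁ < q₂ →
      Tendsto (fun n => ν n y (Set.Icc (q₁ : ℝ) (q₂ : ℝ))) atTop
        (𝓝 (ν₀ y (Set.Icc (q₁ : ℝ) (q₂ : ℝ))))) :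
    SigmaThetaTendsto Θ ν ν₀ := by
  intro j q₁ q₂ hq ε hε
  have hqR : (q₁ : ℝ) < q₂ := Rat.cast_lt.2 hq
  obtain ⟨c, hc, hlc⟩ := hlbd (j + 1) le_add_self
  set C := (⌊(q₂ : ℝ) - q₁⌋₊ + 1) * c
  have hC : 0 < C := by positivity
  obtain ⟨δ, hδ, hωδ⟩ := (hω.continuousOn (j + 1) 0 self_mem_Ici).exists_pos_forall_Icc_le
    (hω.map_zero (j + 1)) (by positivity : 0 < ε / (3 * C))
  obtain ⟨K, hK, F, hFD, hF, hgrid⟩ :=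
    exists_grid_finite_net hDd hΘ j hq (lt_min hδ one_pos) (min_le_right _ _)
  obtain ⟨n₀, hn₀⟩ := eventually_atTop.1 (eventually_abs_stepSum_sub_lt hF (fun x hx k _ => by
    simpa only [Rat.cast_gridPoint] using hconv x (hFD hx) _ _ (gridPoint_lt_succ hq hK k))
    (div_pos hε three_pos))
  refine ⟨n₀, fun n hn y hy L L₀ hL hL₀ => ?_⟩
  obtain ⟨d, hd⟩ := hgrid y hy
  have hy' : ∀ s ∈ Icc (q₁ : ℝ) q₂, ‖y s‖ ≤ (j + 1 : ℕ) := fun s hs => by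
    push_cast; linarith [hy.2.1 s hs]
  have hclose : ∀ k < K, ∀ s ∈ Icc (gridPoint (q₁ : ℝ) q₂ K k) (gridPoint (q₁ : ℝ) q₂ K (k + 1)),
      ω (j + 1) ‖y s - d k‖ ≤ ε / (3 * C) := fun k hk s hs =>
    hωδ _ ⟨norm_nonneg _, ((hd k hk).2.2 s hs).trans (min_le_left _ _)⟩
  have hLn := (hL.abs_sub_stepSum_le (hν n).1 (hlB n _ le_add_self) hqR hK hy'
    (fun k hk => (hd k hk).2.1) hclose).trans <| mul_le_mul_of_nonneg_left
      (toReal_measure_Icc_le hc.le (fun t => (hlc t).1 n) _ _) (by positivity)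
  have hL₀n := (hL₀.abs_sub_stepSum_le hν₀.1 (hlB0 _ le_add_self) hqR hK hy'
    (fun k hk => (hd k hk).2.1) hclose).trans <| mul_le_mul_of_nonneg_left
      (toReal_measure_Icc_le hc.le (fun t => (hlc t).2) _ _) (by positivity)
  have hthird : ε / (3 * C) * C = ε / 3 := by field_simp
  linarith [hn₀ n hn d fun k hk => (hd k hk).1, abs_sub_le L (stepSum (ν n) d q₁ q₂ K) L₀,
    abs_sub_le (stepSum (ν n) d q₁ q₂ K) (stepSum ν₀ d q₁ q₂ K) L₀,
    abs_sub_comm (stepSum ν₀ d q₁ q₂ K) L₀]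

theorem stmt10 {N : ℕ} (ω : ℕ → ℝ → ℝ) (hω : IsModulusFamily ω)
    (D : Set (EuclideanSpace ℝ (Fin N))) (hDc : D.Countable) (hDd : Dense D)
    (Θ : ℕ → ℚ → ℚ → ℝ → ℝ) (hΘ : IsSuitableModuli Θ)
    (ν : ℕ → EuclideanSpace ℝ (Fin N) → Set ℝ → ℝ)
    (ν₀ : EuclideanSpace ℝ (Fin N) → Set ℝ → ℝ)
    (hν : ∀ n, IsParamBMeasure ω (ν n)) (hν₀ : IsParamBMeasure ω ν₀)
    (lB : ℕ → ℕ → Measure ℝ) (lB0 : ℕ → Measure ℝ)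
    (hlB : ∀ n j, 1 ≤ j → HasLBound (ω j) (ν n) j (lB n j))
    (hlB0 : ∀ j, 1 ≤ j → HasLBound (ω j) ν₀ j (lB0 j))
    (hlbd : ∀ j, 1 ≤ j → ∃ c > (0 : ℝ), ∀ t : ℝ,
      (∀ n, lB n j (Set.Icc t (t + 1)) ≤ ENNReal.ofReal c) ∧
      lB0 j (Set.Icc t (t + 1)) ≤ ENNReal.ofReal c)
    (hconv : ∀ y ∈ D, ∀ q₁ q₂ : ℚ, q₁ < q₂ →
      Tendsto (fun n => ν n y (Set.Icc (q₁ : ℝ) (q₂ : ℝ))) atTop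
        (𝓝 (ν₀ y (Set.Icc (q₁ : ℝ) (q₂ : ℝ))))) :
    SigmaThetaTendsto Θ ν ν₀ :=
  stmt10_general ω hω D hDd Θ hΘ ν ν₀ hν hν₀ lB lB0 hlB hlB0 hlbd hconv
end

section
/- Let g : ℝ^N × ℝ → ℝ^N be such that g(·, t) is measurable in t for each fixed y, g(y, ·) is continuous in y for almost every t, and for every compact set K ⊂ ℝ^N there exist nonnegative locally Lebesgue-integrable functions m̃_K and l̃_K on ℝ with |g(y,t)| ≤ m̃_K(t) for a.e. t and all y ∈ K, and |g(y₁,t) − g(y₂,t)| ≤ l̃_K(t)·|y₁ − y₂| for a.e. t and all y₁, y₂ ∈ K. Let y : [a,b] → ℝ^N be continuous. Then for every ε > 0 there exists δ > 0 such that for every tagged δ-partition {(τ_i, [t_i, t_{i+1}]) : i = 1,…,k−1} of [a,b], one has |∫_a^b g(y(s), s) ds − Σ_{i=1}^{k−1} ∫_{t_i}^{t_{i+1}} g(y(τ_i), s) ds| < ε, where all integrals are Lebesgue integrals. In particular, the Riemann-type sums Σ_i ∫_{t_i}^{t_{i+1}} g(y(τ_i), s) ds converge to ∫_a^b g(y(s),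 s) ds as the mesh of the tagged partition tends to 0. -/
open MeasureTheory Set Filter Topology

variable {E : Type*} [NormedAddCommGroup E]

/-! On the piece `[tᵢ, tᵢ₊₁]` the two integrands differ by at most `l_K(s) ‖y(s) - y(τᵢ)‖`,
where `K = y([a,b])`. Uniform continuity of `y` on `[a,b]` makes `‖y(s) - y(τᵢ)‖ < η` once the
mesh is below some `δ`, so the total error is at most `η ∫_a^b l_K`, which is `< ε` for small `η`.
That `s ↦ g(y(s), s)` is measurable at all is the Carathéodory argument: approximate `y` by
simple functions, along which the composite is measurable, and pass to the limit using the
continuity of `g(·, s)`. -/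

section Caratheodory

variable {α X F : Type*} [MeasurableSpace α] {μ : Measure α} [TopologicalSpace X]
  {g : X → α → F} {Y : α → X}

theorem aestronglyMeasurable_caratheodory_comp [TopologicalSpace F]
    [TopologicalSpace.PseudoMetrizableSpace F] [SecondCountableTopology F] [MeasurableSpace F]
    [OpensMeasurableSpace F]
    (hmeas : ∀ z, Measurable (g z)) (hcont : ∀ᵐ t ∂μ, Continuous fun z => g z t)
    (hY : AEStronglyMeasurable Y μ) :
    AEStronglyMeasurable (fun t => g (Y t) t) μ := by
  obtain ⟨Y', hY', hYY'⟩ := hY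
  have hY'_comp : AEStronglyMeasurable (fun t => g (Y' t) t) μ := by
    refine aestronglyMeasurable_of_tendsto_ae atTop
      (fun n => ((hY'.approx n).measurable_bind g hmeas).aestronglyMeasurable) ?_
    filter_upwards [hcont] with t ht
    exact (ht.tendsto _).comp (hY'.tendsto_approx t)
  refine hY'_comp.congr ?_
  filter_upwards [hYY'] with t ht
  rw [ht]

theorem integrableOn_caratheodory_comp [NormedAddCommGroup F] [SecondCountableTopology F]
    [MeasurableSpace F] [BorelSpace F] {s : Set α} {K : Set X} {m : α → ℝ}
    (hmeas : ∀ z, Measurable (g z)) (hcont : ∀ᵐ t ∂μ, Continuous fun z => g z t)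
    (hY : AEStronglyMeasurable Y (μ.restrict s)) (hs : MeasurableSet s) (hYK : ∀ t ∈ s, Y t ∈ K)
    (hm : IntegrableOn m s μ) (hgm : ∀ᵐ t ∂μ, ∀ z ∈ K, ‖g z t‖ ≤ m t) :
    IntegrableOn (fun t => g (Y t) t) s μ := by
  refine hm.mono' (aestronglyMeasurable_caratheodory_comp hmeas (ae_restrict_of_ae hcont) hY) ?_
  filter_upwards [ae_restrict_mem hs, ae_restrict_of_ae hgm] with t ht hgt
  exact hgt _ (hYK t ht)

end Caratheodory

namespace TaggedPartition

variable {a b : ℝ} (P : TaggedPartition a b)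

theorem t_strictMonoOn : StrictMonoOn P.t (Iic P.k) :=
  strictMonoOn_Iic_of_lt_succ fun i hi => P.lt i hi

theorem t_mem_Icc {i : ℕ} (hi : i ≤ P.k) : P.t i ∈ Icc a b := by
  have hmono := P.t_strictMonoOn.monotoneOn
  constructor
  · simpa only [P.left] using hmono (Nat.zero_le P.k) hi (Nat.zero_le i)
  · simpa only [P.right] using hmono hi (le_refl P.k) hi

theorem le {a b : ℝ} (P : TaggedPartition a b) : a ≤ b :=
  nonempty_Icc.mp ⟨_, P.t_mem_Icc (Nat.zero_le P.k)⟩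

theorem Icc_subset {i : ℕ} (hi : i < P.k) : Icc (P.t i) (P.t (i + 1)) ⊆ Icc a b :=
  Icc_subset_Icc (P.t_mem_Icc hi.le).1 (P.t_mem_Icc hi).2

theorem tag_mem_Icc {i : ℕ} (hi : i < P.k) : P.tag i ∈ Icc a b :=
  P.Icc_subset hi (P.tag_mem i hi)

theorem dist_tag_lt {δ : ℝ} (hP : P.MeshLT δ) {i : ℕ} (hi : i < P.k) {s : ℝ}
    (hs : s ∈ Icc (P.t i) (P.t (i + 1))) : dist s (P.tag i) < δ := by
  have htag := P.tag_mem i hi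
  rw [Real.dist_eq, abs_lt]
  constructor <;> linarith [hP i hi, hs.1, hs.2, htag.1, htag.2]

theorem exists_forall_meshLT_dist_tag_lt {X : Type*} [PseudoMetricSpace X] {y : ℝ → X}
    (hy : ContinuousOn y (Icc a b)) {η : ℝ} (hη : 0 < η) :
    ∃ δ > 0, ∀ P : TaggedPartition a b, P.MeshLT δ → ∀ i < P.k,
      ∀ s ∈ Icc (P.t i) (P.t (i + 1)), dist (y s) (y (P.tag i)) < η := by
  obtain ⟨δ, hδ, hyδ⟩ := Metric.uniformContinuousOn_iff.mp
    (isCompact_Icc.uniformContinuousOn_of_continuous hy) η hη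
  exact ⟨δ, hδ, fun P hP i hi s hs =>
    hyδ s (P.Icc_subset hi hs) _ (P.tag_mem_Icc hi) (P.dist_tag_lt hP hi hs)⟩

variable {F : Type*} [NormedAddCommGroup F]

theorem intervalIntegrable_of_integrableOn {f : ℝ → F} (hf : IntegrableOn f (Icc a b))
    {i : ℕ} (hi : i < P.k) : IntervalIntegrable f volume (P.t i) (P.t (i + 1)) :=
  (intervalIntegrable_iff_integrableOn_Ioc_of_le (P.lt i hi).le).mpr
    (hf.mono_set ((P.Icc_subset hi).trans' Ioc_subset_Icc_self))

theorem norm_integral_sub_sum_le [NormedSpace ℝ F] {f : ℝ → F} {h : ℕ → ℝ → F} {l : ℝ → ℝ}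
    (hf : IntegrableOn f (Icc a b)) (hh : ∀ i < P.k, IntegrableOn (h i) (Icc a b))
    (hl : IntegrableOn l (Icc a b))
    (hfh : ∀ i < P.k, ∀ᵐ s, s ∈ Ioc (P.t i) (P.t (i + 1)) → ‖f s - h i s‖ ≤ l s) :
    ‖(∫ s in Icc a b, f s) - ∑ i ∈ Finset.range P.k, ∫ s in Icc (P.t i) (P.t (i + 1)), h i s‖
      ≤ ∫ s in Icc a b, l s := by
  have hf_int := fun i (hi : i < P.k) => P.intervalIntegrable_of_integrableOn hf hi
  have hh_int := fun i (hi : i < P.k) => P.intervalIntegrable_of_integrableOn (hh i hi) hi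
  have hl_int := fun i (hi : i < P.k) => P.intervalIntegrable_of_integrableOn hl hi
  have hpiece : ∀ i ∈ Finset.range P.k, ∫ s in Icc (P.t i) (P.t (i + 1)), h i s =
      ∫ s in P.t i..P.t (i + 1), h i s := fun i hi => by
    rw [intervalIntegral.integral_of_le (P.lt i (Finset.mem_range.mp hi)).le,
      integral_Icc_eq_integral_Ioc]
  have hwhole : ∫ s in Icc a b, f s = ∑ i ∈ Finset.range P.k, ∫ s in P.t i..P.t (i + 1), f s := by
    rw [intervalIntegral.sum_integral_adjacent_intervals hf_int, P.left, P.right,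
      intervalIntegral.integral_of_le P.le, integral_Icc_eq_integral_Ioc]
  calc _ = ‖∑ i ∈ Finset.range P.k, ∫ s in P.t i..P.t (i + 1), (f s - h i s)‖ := by
        rw [hwhole, Finset.sum_congr rfl hpiece, ← Finset.sum_sub_distrib]
        refine congrArg _ (Finset.sum_congr rfl fun i hi => ?_)
        have hi := Finset.mem_range.mp hi
        exact (intervalIntegral.integral_sub (hf_int i hi) (hh_int i hi)).symm
    _ ≤ ∑ i ∈ Finset.range P.k, ‖∫ s in P.t i..P.t (i + 1), (f s - h i s)‖ := norm_sum_le _ _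
    _ ≤ ∑ i ∈ Finset.range P.k, ∫ s in P.t i..P.t (i + 1), l s :=
        Finset.sum_le_sum fun i hi => intervalIntegral.norm_integral_le_of_norm_le
          (P.lt i (Finset.mem_range.mp hi)).le (hfh i (Finset.mem_range.mp hi))
          (hl_int i (Finset.mem_range.mp hi))
    _ = ∫ s in Icc a b, l s := by
        rw [intervalIntegral.sum_integral_adjacent_intervals hl_int, P.left, P.right,
          intervalIntegral.integral_of_le P.le, integral_Icc_eq_integral_Ioc]

end TaggedPartition

theorem stmt18_general {N : ℕ} (g : EuclideanSpace ℝ (Fin N) → ℝ → EuclideanSpace ℝ (Fin N))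
    (hmeas : ∀ z, Measurable fun t => g z t)
    (hcont : ∀ᵐ t ∂(volume : Measure ℝ), Continuous fun z => g z t)
    (hm : ∀ K : Set (EuclideanSpace ℝ (Fin N)), IsCompact K →
      ∃ mK : ℝ → ℝ, (∀ t, 0 ≤ mK t) ∧ LocallyIntegrable mK ∧
        ∀ᵐ t ∂(volume : Measure ℝ), ∀ z ∈ K, ‖g z t‖ ≤ mK t)
    (hl : ∀ K : Set (EuclideanSpace ℝ (Fin N)), IsCompact K →
      ∃ lK : ℝ → ℝ, (∀ t, 0 ≤ lK t) ∧ LocallyIntegrable lK ∧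
        ∀ᵐ t ∂(volume : Measure ℝ), ∀ z₁ ∈ K, ∀ z₂ ∈ K,
          ‖g z₁ t - g z₂ t‖ ≤ lK t * ‖z₁ - z₂‖)
    (a b : ℝ) (y : ℝ → EuclideanSpace ℝ (Fin N))
    (hy : ContinuousOn y (Set.Icc a b)) :
    ∀ ε > 0, ∃ δ > 0, ∀ P : TaggedPartition a b, P.MeshLT δ →
      ‖(∫ s in Set.Icc a b, g (y s) s) -
        ∑ i ∈ Finset.range P.k, ∫ s in Set.Icc (P.t i) (P.t (i + 1)), g (y (P.tag i)) s‖
        < ε := by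
  intro ε hε
  have hK : IsCompact (y '' Icc a b) := isCompact_Icc.image_of_continuousOn hy
  have hy_mem : ∀ s ∈ Icc a b, y s ∈ y '' Icc a b := fun s hs => mem_image_of_mem y hs
  obtain ⟨mK, -, hmK_int, hmK⟩ := hm _ hK
  obtain ⟨lK, hlK_nonneg, hlK_int, hlK⟩ := hl _ hK
  have hmK_Icc := hmK_int.integrableOn_isCompact (isCompact_Icc (a := a) (b := b))
  have hgy : IntegrableOn (fun s => g (y s) s) (Icc a b) :=
    integrableOn_caratheodory_comp hmeas hcont (hy.aestronglyMeasurable measurableSet_Icc)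
      measurableSet_Icc hy_mem hmK_Icc hmK
  have hgz : ∀ s ∈ Icc a b, IntegrableOn (g (y s)) (Icc a b) := fun s hs =>
    integrableOn_caratheodory_comp hmeas hcont aestronglyMeasurable_const measurableSet_Icc
      (fun _ _ => hy_mem s hs) hmK_Icc hmK
  set C := ∫ s in Icc a b, lK s
  have hC : 0 ≤ C := setIntegral_nonneg measurableSet_Icc fun s _ => hlK_nonneg s
  set η := ε / (C + 1)
  obtain ⟨δ, hδ, hyδ⟩ := TaggedPartition.exists_forall_meshLT_dist_tag_lt hy
    (show 0 < η by positivity)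
  refine ⟨δ, hδ, fun P hP => ?_⟩
  have hlip : ∀ i < P.k, ∀ᵐ s, s ∈ Ioc (P.t i) (P.t (i + 1)) →
      ‖g (y s) s - g (y (P.tag i)) s‖ ≤ lK s * η := fun i hi => by
    filter_upwards [hlK] with s hs hsi
    have hdist := hyδ P hP i hi s (Ioc_subset_Icc_self hsi)
    calc ‖g (y s) s - g (y (P.tag i)) s‖ ≤ lK s * ‖y s - y (P.tag i)‖ :=
          hs _ (hy_mem s (P.Icc_subset hi (Ioc_subset_Icc_self hsi))) _
            (hy_mem _ (P.tag_mem_Icc hi))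
      _ ≤ lK s * η := by gcongr; exacts [hlK_nonneg s, (dist_eq_norm (y s) _ ▸ hdist).le]
  calc _ ≤ ∫ s in Icc a b, lK s * η :=
        P.norm_integral_sub_sum_le hgy (fun i hi => hgz _ (P.tag_mem_Icc hi))
          ((hlK_int.integrableOn_isCompact isCompact_Icc).mul_const η) hlip
    _ = C * η := integral_mul_const η lK
    _ < (C + 1) * η := by gcongr; linarith
    _ = ε := mul_div_cancel₀ ε (by positivity)

theorem stmt18 {N : ℕ} (g : EuclideanSpace ℝ (Fin N) → ℝ → EuclideanSpace ℝ (Fin N))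
    (hmeas : ∀ z, Measurable fun t => g z t)
    (hcont : ∀ᵐ t ∂(volume : Measure ℝ), Continuous fun z => g z t)
    (hm : ∀ K : Set (EuclideanSpace ℝ (Fin N)), IsCompact K →
      ∃ mK : ℝ → ℝ, (∀ t, 0 ≤ mK t) ∧ LocallyIntegrable mK ∧
        ∀ᵐ t ∂(volume : Measure ℝ), ∀ z ∈ K, ‖g z t‖ ≤ mK t)
    (hl : ∀ K : Set (EuclideanSpace ℝ (Fin N)), IsCompact K →
      ∃ lK : ℝ → ℝ, (∀ t, 0 ≤ lK t) ∧ LocallyIntegrable lK ∧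
        ∀ᵐ t ∂(volume : Measure ℝ), ∀ z₁ ∈ K, ∀ z₂ ∈ K,
          ‖g z₁ t - g z₂ t‖ ≤ lK t * ‖z₁ - z₂‖)
    (a b : ℝ) (hab : a ≤ b) (y : ℝ → EuclideanSpace ℝ (Fin N))
    (hy : ContinuousOn y (Set.Icc a b)) :
    ∀ ε > 0, ∃ δ > 0, ∀ P : TaggedPartition a b, P.MeshLT δ →
      ‖(∫ s in Set.Icc a b, g (y s) s) -
        ∑ i ∈ Finset.range P.k, ∫ s in Set.Icc (P.t i) (P.t (i + 1)), g (y (P.tag i)) s‖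
        < ε :=
  stmt18_general g hmeas hcont hm hl a b y hy
end

section
/- Let g₁, g₂ : ℝ^m × ℝ → ℝ^m be measurable in τ for each fixed y and continuous in y for a.e. τ, with nonnegative locally Lebesgue-integrable m-bounds on compact sets (for every compact K ⊂ ℝ^m there is locally integrable m̃_K with |g_i(y,τ)| ≤ m̃_K(τ) for a.e. τ and all y ∈ K, i = 1,2). Fix j ≥ 1 and suppose g₁ has an l-bound l̃_j ∈ L¹_loc on the closed ball B_j ⊂ ℝ^m: |g₁(y₁,τ) − g₁(y₂,τ)| ≤ l̃_j(τ)·|y₁ − y₂| for a.e. τ and all |y₁|, |y₂| ≤ j. Let y₁, y₂ : [a,b] → ℝ^m be continuous with y₁(t) = y₁(a) + ∫_a^t g₁(y₁(s), s) ds and y₂(t) = y₂(a) + ∫_a^t g₂(y₂(s), s) ds for all t ∈ [a,b], with y₁(a) = y₂(a) and y₁([a,b]), y₂([a,b]) ⊆ B_j. Suppose for some σ > 0 that |g₁(y₂(τ), τ) − g₂(y₂(τ), τ)| ≤ l̃_j(τ)·σ for a.e. τ ∈ [a,b]. Then, for any constant c_j > 0 such that ∫_s^{s+(b−a)} l̃_j(τ)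 dτ ≤ c_j for all s ∈ ℝ, one has |y₁(τ) − y₂(τ)| ≤ c_j · e^{c_j} · σ for every τ ∈ [a,b]. -/
open MeasureTheory Set Filter Topology

variable {E : Type*} [NormedAddCommGroup E]

/-! Write `u = ‖y₁ - y₂‖`. Splitting `g₁ (y₁ s) s - g₂ (y₂ s) s` at `g₁ (y₂ s) s`, the Lipschitz
bound controls the first part and the closeness assumption the second, so
`u t + σ ≤ σ + ∫_a^t l̃_j (u + σ)`. Gronwall's inequality with the integrable kernel `l̃_j` gives
`u + σ ≤ σ e^{∫ l̃_j} ≤ σ e^{c_j}`, and `e^c - 1 ≤ c e^c`.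

Gronwall's inequality for an `L¹` kernel holds because `(C + ∫_a^t l v) e^{-∫_a^t l}` is
absolutely continuous with almost everywhere nonpositive derivative. -/

open scoped NNReal

theorem LipschitzOnWith.comp_absolutelyContinuousOnInterval {X Y : Type*} [PseudoMetricSpace X]
    [PseudoMetricSpace Y] {g : X → Y} {K : ℝ≥0} {s : Set X} {f : ℝ → X} {a b : ℝ}
    (hg : LipschitzOnWith K g s) (hf : AbsolutelyContinuousOnInterval f a b)
    (hfs : MapsTo f (uIcc a b) s) : AbsolutelyContinuousOnInterval (g ∘ f) a b := by
  refine squeeze_zero' (Eventually.of_forall fun _ => Finset.sum_nonneg fun _ _ => dist_nonneg)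
    ?_ (by simpa using Tendsto.const_mul (K : ℝ) hf)
  filter_upwards [mem_inf_of_right (mem_principal_self _)] with E hE
  rw [Finset.mul_sum]
  exact Finset.sum_le_sum fun i hi => hg.dist_le_mul _ (hfs (hE.1 i hi).1) _ (hfs (hE.1 i hi).2)

theorem Real.lipschitzOnWith_exp_Iic_zero : LipschitzOnWith 1 Real.exp (Iic 0) :=
  (convex_Iic 0).lipschitzOnWith_of_nnnorm_deriv_le (fun _ _ => Real.differentiableAt_exp)
    fun x hx => by
      rw [Real.deriv_exp, ← NNReal.coe_le_coe, coe_nnnorm, Real.norm_eq_abs,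
        abs_of_pos (Real.exp_pos x)]
      simpa using hx

theorem Real.exp_sub_one_le_mul_exp (x : ℝ) : Real.exp x - 1 ≤ x * Real.exp x := by
  have := mul_le_mul_of_nonneg_right (Real.one_sub_le_exp_neg x) (Real.exp_pos x).le
  rwa [← Real.exp_add, neg_add_cancel, Real.exp_zero, sub_mul, one_mul, sub_le_comm] at this

theorem AbsolutelyContinuousOnInterval.le_of_ae_deriv_nonpos {f : ℝ → ℝ} {a b : ℝ}
    (hf : AbsolutelyContinuousOnInterval f a b) (hab : a ≤ b)
    (hf' : ∀ᵐ x, x ∈ Icc a b → deriv f x ≤ 0) : f b ≤ f a := by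
  rw [← sub_nonpos, ← hf.integral_deriv_eq_sub, ← neg_nonneg, ← intervalIntegral.integral_neg]
  refine intervalIntegral.integral_nonneg_of_ae_restrict hab ?_
  filter_upwards [(ae_restrict_iff' measurableSet_Icc).2 hf'] with x hx
  simpa using hx

theorem le_mul_exp_integral_of_le_add_integral {l v : ℝ → ℝ} {a b C : ℝ}
    (hl : IntegrableOn l (Icc a b)) (hl0 : ∀ t ∈ Icc a b, 0 ≤ l t) (hvc : ContinuousOn v (Icc a b))
    (hv : ∀ t ∈ Icc a b, v t ≤ C + ∫ s in a..t, l s * v s) :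
    ∀ t ∈ Icc a b, v t ≤ C * Real.exp (∫ s in a..t, l s) := by
  intro t ht
  have hab : a ≤ b := ht.1.trans ht.2
  have hlv := (intervalIntegrable_iff_integrableOn_Icc_of_le hab).2
    (hl.mul_continuousOn hvc isCompact_Icc)
  replace hl := (intervalIntegrable_iff_integrableOn_Icc_of_le hab).2 hl
  have hsub : uIcc a t ⊆ uIcc a b := uIcc_subset_uIcc_left (Icc_subset_uIcc ht)
  have hat : a ∈ uIcc a t := left_mem_uIcc
  set Λ : ℝ → ℝ := fun x => ∫ s in a..x, l s
  set V : ℝ → ℝ := fun x => ∫ s in a..x, l s * v s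
  set W : ℝ → ℝ := fun x => (C + V x) * Real.exp (-Λ x)
  have hΛ : ∀ x ∈ uIcc a t, -Λ x ≤ 0 := fun x hx => by
    rw [uIcc_of_le ht.1] at hx
    have : 0 ≤ Λ x := intervalIntegral.integral_nonneg hx.1 fun s hs =>
      hl0 s ⟨hs.1, hs.2.trans (hx.2.trans ht.2)⟩
    linarith
  have hWac : AbsolutelyContinuousOnInterval W a t :=
    ((LipschitzWith.const C).lipschitzOnWith.absolutelyContinuousOnInterval.fun_add
      ((hlv.mono_set hsub).absolutelyContinuousOnInterval_intervalIntegral hat)).fun_mul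
      (Real.lipschitzOnWith_exp_Iic_zero.comp_absolutelyContinuousOnInterval
        ((hl.mono_set hsub).absolutelyContinuousOnInterval_intervalIntegral hat).fun_neg hΛ)
  have hW' : ∀ᵐ x, x ∈ Icc a t → deriv W x ≤ 0 := by
    filter_upwards [(hl.mono_set hsub).ae_hasDerivAt_integral,
      (hlv.mono_set hsub).ae_hasDerivAt_integral] with x hΛx hVx hx
    have hW : HasDerivAt W
        (l x * v x * Real.exp (-Λ x) + (C + V x) * (Real.exp (-Λ x) * -l x)) x :=
      ((hVx (Icc_subset_uIcc hx) a hat).const_add C).mul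
        (hΛx (Icc_subset_uIcc hx) a hat).neg.exp
    have hxab : x ∈ Icc a b := ⟨hx.1, hx.2.trans ht.2⟩
    rw [hW.deriv]
    nlinarith [mul_le_mul_of_nonneg_left (hv x hxab) (hl0 x hxab), Real.exp_pos (-Λ x)]
  have hWt : W t ≤ C := (hWac.le_of_ae_deriv_nonpos ht.1 hW').trans_eq (by simp [W, V, Λ])
  have hCV : C + V t = W t * Real.exp (Λ t) := by
    simp only [W, mul_assoc, ← Real.exp_add, neg_add_cancel, Real.exp_zero, mul_one]
  linarith [hv t ht, mul_le_mul_of_nonneg_right hWt (Real.exp_pos (Λ t)).le]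

theorem aestronglyMeasurable_comp_of_continuous_of_stronglyMeasurable {α X F : Type*}
    [MeasurableSpace α] {μ : Measure α} [TopologicalSpace X] [TopologicalSpace.MetrizableSpace X]
    [SecondCountableTopology X] [MeasurableSpace X] [OpensMeasurableSpace X] [TopologicalSpace F]
    [TopologicalSpace.PseudoMetrizableSpace F] [Zero F] {g : X → α → F}
    (hg : ∀ z, StronglyMeasurable (g z)) (hc : ∀ᵐ τ ∂μ, Continuous fun z => g z τ)
    {y : α → X} (hy : AEMeasurable y μ) :
    AEStronglyMeasurable (fun τ => g (y τ) τ) μ := by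
  set N := toMeasurable μ {τ | ¬Continuous fun z => g z τ}
  have hN : μ N = 0 := by rw [measure_toMeasurable]; exact hc
  set g' : X → α → F := fun z => Nᶜ.indicator (g z)
  have hg' : StronglyMeasurable (Function.uncurry g') :=
    stronglyMeasurable_uncurry_of_continuous_of_stronglyMeasurable
      (fun τ => by
        by_cases hτ : τ ∈ N
        · simpa [g', hτ] using continuous_const
        · simpa [g', hτ] using not_not.1 fun h => hτ (subset_toMeasurable _ _ h))
      fun z => (hg z).indicator (measurableSet_toMeasurable _ _).compl
  refine (hg'.aestronglyMeasurable.comp_aemeasurable (hy.prodMk aemeasurable_id)).congr ?_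
  filter_upwards [measure_eq_zero_iff_ae_notMem.1 hN] with τ hτ
  simp [g', hτ]

theorem integrableOn_comp_of_norm_le {X F : Type*} [TopologicalSpace X]
    [TopologicalSpace.MetrizableSpace X] [SecondCountableTopology X] [MeasurableSpace X]
    [BorelSpace X] [NormedAddCommGroup F] {g : X → ℝ → F}
    (hg : ∀ z, StronglyMeasurable (g z)) (hc : ∀ᵐ τ, Continuous fun z => g z τ)
    {y : ℝ → X} {s : Set ℝ} (hs : MeasurableSet s) (hy : ContinuousOn y s) {K : Set X}
    (hyK : MapsTo y s K) {M : ℝ → ℝ} (hM : IntegrableOn M s)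
    (hgM : ∀ᵐ τ, ∀ z ∈ K, ‖g z τ‖ ≤ M τ) :
    IntegrableOn (fun τ => g (y τ) τ) s := by
  refine hM.mono' (aestronglyMeasurable_comp_of_continuous_of_stronglyMeasurable hg
    (ae_restrict_of_ae hc) (hy.aemeasurable hs)) ?_
  filter_upwards [ae_restrict_of_ae hgM, ae_restrict_mem hs] with τ hτ hτs
  exact hτ _ (hyK hτs)

theorem norm_sub_le_integral_of_eq_add_integral {F : Type*} [NormedAddCommGroup F]
    [NormedSpace ℝ F] {y₁ y₂ f₁ f₂ : ℝ → F} {w : ℝ → ℝ} {a b : ℝ}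
    (h₁ : ∀ t ∈ Icc a b, y₁ t = y₁ a + ∫ s in Icc a t, f₁ s)
    (h₂ : ∀ t ∈ Icc a b, y₂ t = y₂ a + ∫ s in Icc a t, f₂ s) (hinit : y₁ a = y₂ a)
    (hf₁ : IntegrableOn f₁ (Icc a b)) (hf₂ : IntegrableOn f₂ (Icc a b))
    (hw : IntegrableOn w (Icc a b)) (hf : ∀ᵐ s, s ∈ Icc a b → ‖f₁ s - f₂ s‖ ≤ w s) :
    ∀ t ∈ Icc a b, ‖y₁ t - y₂ t‖ ≤ ∫ s in a..t, w s := by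
  intro t ht
  have hsub : Icc a t ⊆ Icc a b := Icc_subset_Icc_right ht.2
  have hdiff : y₁ t - y₂ t = ∫ s in a..t, (f₁ s - f₂ s) := by
    rw [h₁ t ht, h₂ t ht, hinit, intervalIntegral.integral_of_le ht.1,
      ← integral_Icc_eq_integral_Ioc, integral_sub (hf₁.mono_set hsub) (hf₂.mono_set hsub)]
    abel
  rw [hdiff]
  refine intervalIntegral.norm_integral_le_of_norm_le ht.1 ?_
    ((intervalIntegrable_iff_integrableOn_Icc_of_le ht.1).2 (hw.mono_set hsub))
  filter_upwards [hf] with s hs hst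
  exact hs ⟨hst.1.le, hst.2.trans ht.2⟩

theorem norm_sub_le_integral_of_lipschitz {F : Type*} [NormedAddCommGroup F] [NormedSpace ℝ F]
    [SecondCountableTopology F] [MeasurableSpace F] [BorelSpace F] {g₁ g₂ : F → ℝ → F}
    (hmeas₁ : ∀ z, Measurable (g₁ z)) (hmeas₂ : ∀ z, Measurable (g₂ z))
    (hcont₁ : ∀ᵐ τ, Continuous fun z => g₁ z τ) (hcont₂ : ∀ᵐ τ, Continuous fun z => g₂ z τ)
    {a b r σ : ℝ} {M l : ℝ → ℝ} (hM : IntegrableOn M (Icc a b))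
    (hgM : ∀ᵐ τ, ∀ z ∈ Metric.closedBall 0 r, ‖g₁ z τ‖ ≤ M τ ∧ ‖g₂ z τ‖ ≤ M τ)
    (hl : IntegrableOn l (Icc a b))
    (hlip : ∀ᵐ τ, ∀ z₁ z₂ : F, ‖z₁‖ ≤ r → ‖z₂‖ ≤ r → ‖g₁ z₁ τ - g₁ z₂ τ‖ ≤ l τ * ‖z₁ - z₂‖)
    {y₁ y₂ : ℝ → F} (hy₁ : ContinuousOn y₁ (Icc a b)) (hy₂ : ContinuousOn y₂ (Icc a b))
    (h₁ : ∀ t ∈ Icc a b, y₁ t = y₁ a + ∫ s in Icc a t, g₁ (y₁ s) s)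
    (h₂ : ∀ t ∈ Icc a b, y₂ t = y₂ a + ∫ s in Icc a t, g₂ (y₂ s) s) (hinit : y₁ a = y₂ a)
    (hb₁ : ∀ t ∈ Icc a b, ‖y₁ t‖ ≤ r) (hb₂ : ∀ t ∈ Icc a b, ‖y₂ t‖ ≤ r)
    (hclose : ∀ᵐ τ, τ ∈ Icc a b → ‖g₁ (y₂ τ) τ - g₂ (y₂ τ) τ‖ ≤ l τ * σ) :
    ∀ t ∈ Icc a b, ‖y₁ t - y₂ t‖ ≤ ∫ s in a..t, l s * (‖y₁ s - y₂ s‖ + σ) := by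
  have hball {y : ℝ → F} (hy : ∀ t ∈ Icc a b, ‖y t‖ ≤ r) :
      MapsTo y (Icc a b) (Metric.closedBall 0 r) := fun t ht => mem_closedBall_zero_iff.2 (hy t ht)
  refine norm_sub_le_integral_of_eq_add_integral h₁ h₂ hinit
    (integrableOn_comp_of_norm_le (fun z => (hmeas₁ z).stronglyMeasurable) hcont₁
      measurableSet_Icc hy₁ (hball hb₁) hM (hgM.mono fun _ h z hz => (h z hz).1))
    (integrableOn_comp_of_norm_le (fun z => (hmeas₂ z).stronglyMeasurable) hcont₂
      measurableSet_Icc hy₂ (hball hb₂) hM (hgM.mono fun _ h z hz => (h z hz).2))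
    (hl.mul_continuousOn ((hy₁.sub hy₂).norm.add continuousOn_const) isCompact_Icc) ?_
  filter_upwards [hlip, hclose] with s hlips hcloses hs
  calc ‖g₁ (y₁ s) s - g₂ (y₂ s) s‖
      ≤ ‖g₁ (y₁ s) s - g₁ (y₂ s) s‖ + ‖g₁ (y₂ s) s - g₂ (y₂ s) s‖ :=
        norm_sub_le_norm_sub_add_norm_sub _ _ _
    _ ≤ l s * ‖y₁ s - y₂ s‖ + l s * σ := add_le_add (hlips _ _ (hb₁ s hs) (hb₂ s hs)) (hcloses hs)
    _ = l s * (‖y₁ s - y₂ s‖ + σ) := by ring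

theorem stmt19_general {m : ℕ} (g₁ g₂ : EuclideanSpace ℝ (Fin m) → ℝ → EuclideanSpace ℝ (Fin m))
    (hmeas₁ : ∀ z, Measurable fun τ => g₁ z τ)
    (hmeas₂ : ∀ z, Measurable fun τ => g₂ z τ)
    (hcont₁ : ∀ᵐ τ ∂(volume : Measure ℝ), Continuous fun z => g₁ z τ)
    (hcont₂ : ∀ᵐ τ ∂(volume : Measure ℝ), Continuous fun z => g₂ z τ)
    (hm : ∀ K : Set (EuclideanSpace ℝ (Fin m)), IsCompact K →
      ∃ mK : ℝ → ℝ, (∀ τ, 0 ≤ mK τ) ∧ LocallyIntegrable mK ∧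
        ∀ᵐ τ ∂(volume : Measure ℝ), ∀ z ∈ K, ‖g₁ z τ‖ ≤ mK τ ∧ ‖g₂ z τ‖ ≤ mK τ)
    (j : ℕ) (lj : ℝ → ℝ) (hlj0 : ∀ τ, 0 ≤ lj τ)
    (hljloc : LocallyIntegrable lj)
    (hlip : ∀ᵐ τ ∂(volume : Measure ℝ), ∀ z₁ z₂ : EuclideanSpace ℝ (Fin m),
      ‖z₁‖ ≤ (j : ℝ) → ‖z₂‖ ≤ (j : ℝ) → ‖g₁ z₁ τ - g₁ z₂ τ‖ ≤ lj τ * ‖z₁ - z₂‖)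
    (a b : ℝ)
    (y₁ y₂ : ℝ → EuclideanSpace ℝ (Fin m))
    (hy₁c : ContinuousOn y₁ (Set.Icc a b)) (hy₂c : ContinuousOn y₂ (Set.Icc a b))
    (heq₁ : ∀ t ∈ Set.Icc a b, y₁ t = y₁ a + ∫ s in Set.Icc a t, g₁ (y₁ s) s)
    (heq₂ : ∀ t ∈ Set.Icc a b, y₂ t = y₂ a + ∫ s in Set.Icc a t, g₂ (y₂ s) s)
    (hinit : y₁ a = y₂ a)
    (hb₁ : ∀ t ∈ Set.Icc a b, ‖y₁ t‖ ≤ (j : ℝ)) (hb₂ : ∀ t ∈ Set.Icc a b, ‖y₂ t‖ ≤ (j : ℝ))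
    (σ : ℝ) (hσ : 0 < σ)
    (hclose : ∀ᵐ τ ∂(volume : Measure ℝ), τ ∈ Set.Icc a b →
      ‖g₁ (y₂ τ) τ - g₂ (y₂ τ) τ‖ ≤ lj τ * σ)
    (cj : ℝ)
    (hcjint : ∀ s : ℝ, ∫ τ in Set.Icc s (s + (b - a)), lj τ ≤ cj) :
    ∀ τ ∈ Set.Icc a b, ‖y₁ τ - y₂ τ‖ ≤ cj * Real.exp cj * σ := by
  intro τ hτ
  have hab : a ≤ b := hτ.1.trans hτ.2
  have hlj : IntegrableOn lj (Icc a b) := hljloc.integrableOn_isCompact isCompact_Icc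
  obtain ⟨mK, -, hmK, hgmK⟩ := hm (Metric.closedBall 0 j) (isCompact_closedBall _ _)
  have hdist := norm_sub_le_integral_of_lipschitz hmeas₁ hmeas₂ hcont₁ hcont₂
    (hmK.integrableOn_isCompact isCompact_Icc) hgmK hlj hlip hy₁c hy₂c heq₁ heq₂ hinit hb₁ hb₂
    hclose
  have hgronwall := le_mul_exp_integral_of_le_add_integral
    (v := fun s => ‖y₁ s - y₂ s‖ + σ) (C := σ) hlj (fun t _ => hlj0 t)
    ((hy₁c.sub hy₂c).norm.add continuousOn_const) (fun t ht => by linarith [hdist t ht]) τ hτ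
  have hΛ : ∫ s in a..τ, lj s ≤ cj := by
    refine (intervalIntegral.integral_mono_interval le_rfl hτ.1 hτ.2 (Eventually.of_forall hlj0)
      ((intervalIntegrable_iff_integrableOn_Icc_of_le hab).2 hlj)).trans ?_
    simpa [intervalIntegral.integral_of_le hab, integral_Icc_eq_integral_Ioc] using hcjint a
  calc ‖y₁ τ - y₂ τ‖ ≤ σ * (Real.exp cj - 1) := by
        nlinarith [mul_le_mul_of_nonneg_left (Real.exp_le_exp.2 hΛ) hσ.le]
    _ ≤ σ * (cj * Real.exp cj) := mul_le_mul_of_nonneg_left (Real.exp_sub_one_le_mul_exp cj) hσ.le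
    _ = cj * Real.exp cj * σ := by ring

theorem stmt19 {m : ℕ} (g₁ g₂ : EuclideanSpace ℝ (Fin m) → ℝ → EuclideanSpace ℝ (Fin m))
    (hmeas₁ : ∀ z, Measurable fun τ => g₁ z τ)
    (hmeas₂ : ∀ z, Measurable fun τ => g₂ z τ)
    (hcont₁ : ∀ᵐ τ ∂(volume : Measure ℝ), Continuous fun z => g₁ z τ)
    (hcont₂ : ∀ᵐ τ ∂(volume : Measure ℝ), Continuous fun z => g₂ z τ)
    (hm : ∀ K : Set (EuclideanSpace ℝ (Fin m)), IsCompact K →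
      ∃ mK : ℝ → ℝ, (∀ τ, 0 ≤ mK τ) ∧ LocallyIntegrable mK ∧
        ∀ᵐ τ ∂(volume : Measure ℝ), ∀ z ∈ K, ‖g₁ z τ‖ ≤ mK τ ∧ ‖g₂ z τ‖ ≤ mK τ)
    (j : ℕ) (hj : 1 ≤ j) (lj : ℝ → ℝ) (hlj0 : ∀ τ, 0 ≤ lj τ)
    (hljloc : LocallyIntegrable lj)
    (hlip : ∀ᵐ τ ∂(volume : Measure ℝ), ∀ z₁ z₂ : EuclideanSpace ℝ (Fin m),
      ‖z₁‖ ≤ (j : ℝ) → ‖z₂‖ ≤ (j : ℝ) → ‖g₁ z₁ τ - g₁ z₂ τ‖ ≤ lj τ * ‖z₁ - z₂‖)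
    (a b : ℝ) (hab : a ≤ b)
    (y₁ y₂ : ℝ → EuclideanSpace ℝ (Fin m))
    (hy₁c : ContinuousOn y₁ (Set.Icc a b)) (hy₂c : ContinuousOn y₂ (Set.Icc a b))
    (heq₁ : ∀ t ∈ Set.Icc a b, y₁ t = y₁ a + ∫ s in Set.Icc a t, g₁ (y₁ s) s)
    (heq₂ : ∀ t ∈ Set.Icc a b, y₂ t = y₂ a + ∫ s in Set.Icc a t, g₂ (y₂ s) s)
    (hinit : y₁ a = y₂ a)
    (hb₁ : ∀ t ∈ Set.Icc a b, ‖y₁ t‖ ≤ (j : ℝ)) (hb₂ : ∀ t ∈ Set.Icc a b, ‖y₂ t‖ ≤ (j : ℝ))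
    (σ : ℝ) (hσ : 0 < σ)
    (hclose : ∀ᵐ τ ∂(volume : Measure ℝ), τ ∈ Set.Icc a b →
      ‖g₁ (y₂ τ) τ - g₂ (y₂ τ) τ‖ ≤ lj τ * σ)
    (cj : ℝ) (hcj : 0 < cj)
    (hcjint : ∀ s : ℝ, ∫ τ in Set.Icc s (s + (b - a)), lj τ ≤ cj) :
    ∀ τ ∈ Set.Icc a b, ‖y₁ τ - y₂ τ‖ ≤ cj * Real.exp cj * σ :=
  stmt19_general g₁ g₂ hmeas₁ hmeas₂ hcont₁ hcont₂ hm j lj hlj0 hljloc hlip a b y₁ y₂ hy₁c hy₂c heq₁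
    heq₂ hinit hb₁ hb₂ σ hσ hclose cj hcjint
end
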